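/- If 0 ≤ I < 1, then for all nonnegative integers Z and L, the success probability of a time-restricted double-spending attack is strictly smaller than one: P_TR(I,Z,L) < 1; in particular this holds even when 1/2 ≤ I < 1, i.e., even when the attacker controls a majority of the hash rate. -/

import Mathlib

/-- `pathCount i m` is the number of sequences `(s 1, …, s (m+2i+1))` with every entry `±1`,
exactly `i` entries equal to `+1` (hence `m+i+1` entries equal to `-1`), such that
`m + s 1 + ⋯ + s T ≥ 0` for every `T ≤ m + 2i` (the walk started at `m` first reaches `-1`
exactly at the final step). -/
noncomputable def pathCount (i m : ℕ) : ℕ :=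
  Nat.card {s : Fin (m + 2 * i + 1) → ℤ //
    (∀ t, s t = 1 ∨ s t = -1) ∧
    (Finset.univ.filter fun t => s t = 1).card = i ∧
    ∀ T : ℕ, T ≤ m + 2 * i →
      0 ≤ (m : ℤ) + ∑ t ∈ Finset.univ.filter (fun t : Fin (m + 2 * i + 1) => (t : ℕ) < T), s t}

/-- Success probability of a time-restricted double-spending attack with `Z` confirmation
blocks and time restriction of `L` honest blocks after confirmation. -/
noncomputable def P_TR (I : ℝ) (Z L : ℕ) : ℝ :=
  1 - ∑ k ∈ Finset.range (Z + 2),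
    (Nat.choose (k + Z) k : ℝ) * I ^ k * (1 - I) ^ (Z + 1) *
      (1 - ∑ i ∈ Finset.range L,
        (pathCount i (Z + 1 - k) : ℝ) * (1 - I) ^ i * I ^ (Z + 2 - k + i))

/-!
Splitting the walks counted by `pathCount` according to their first step gives the recurrences
`a(0, m) = 1`, `a(i+1, 0) = a(i, 1)` and `a(i+1, m+1) = a(i, m+2) + a(i+1, m)`. With `x = 1 - I`
and `y = I` they turn `W(L, m) = ∑_{i<L} a(i, m) xⁱ y^(m+1+i)`, the probability that a walk
started at `m` reaches `-1` within `L` up-steps, into a first-step recursion, and induction on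
`(L, m)` gives `W(L, m) + x^(m+2L) ≤ 1`. Hence every bracket `1 - W` in `P_TR` is positive, all
summands are nonnegative, and the summand `k = 0` is positive.
-/

open Finset

theorem Nat.forall_le_succ_left {P : ℕ → Prop} {n : ℕ} :
    (∀ T ≤ n + 1, P T) ↔ P 0 ∧ ∀ T ≤ n, P (T + 1) := by
  refine ⟨fun h => ⟨h 0 (Nat.zero_le _), fun T hT => h (T + 1) (by omega)⟩, ?_⟩
  rintro ⟨h0, h⟩ (_ | T) hT
  exacts [h0, h T (by omega)]

theorem Nat.card_subtype_eq_card_cons_add_card_cons {α : Type*} {n : ℕ}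
    (P : (Fin (n + 1) → α) → Prop) [Finite {s // P s}] {a b : α} (hab : a ≠ b)
    (hhead : ∀ s, P s → s 0 = a ∨ s 0 = b) :
    Nat.card {s // P s} = Nat.card {s : Fin n → α // P (Fin.cons a s)} +
      Nat.card {s : Fin n → α // P (Fin.cons b s)} := by
  let f : {s : Fin n → α // P (Fin.cons a s)} ⊕ {s : Fin n → α // P (Fin.cons b s)} →
      {s // P s} :=
    Sum.elim (fun s => ⟨Fin.cons a s, s.2⟩) (fun s => ⟨Fin.cons b s, s.2⟩)
  have hf : Function.Injective f := by
    rintro (⟨s, _⟩ | ⟨s, _⟩) (⟨t, _⟩ | ⟨t, _⟩) h <;>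
      simp only [f, Sum.elim_inl, Sum.elim_inr, Subtype.mk.injEq, Fin.cons_inj] at h
    all_goals grind
  have := Finite.of_injective _ (hf.comp Sum.inl_injective)
  have := Finite.of_injective _ (hf.comp Sum.inr_injective)
  rw [← Nat.card_sum]
  refine (Nat.card_congr (Equiv.ofBijective f ⟨hf, ?_⟩)).symm
  rintro ⟨s, hs⟩
  have hs' : P (Fin.cons (s 0) (Fin.tail s)) := by rwa [Fin.cons_self_tail]
  rcases hhead s hs with h | h <;> rw [h] at hs'
  · exact ⟨.inl ⟨Fin.tail s, hs'⟩, by simp [f, ← h]⟩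
  · exact ⟨.inr ⟨Fin.tail s, hs'⟩, by simp [f, ← h]⟩

theorem Fin.sum_filter_val_lt_succ_cons {α : Type*} [AddCommMonoid α] {n : ℕ} (c : α)
    (s : Fin n → α) (T : ℕ) :
    ∑ t ∈ univ.filter (fun t : Fin (n + 1) => (t : ℕ) < T + 1),
        (Fin.cons c s : Fin (n + 1) → α) t =
      c + ∑ t ∈ univ.filter (fun t : Fin n => (t : ℕ) < T), s t := by
  simp [Finset.sum_filter, Fin.sum_univ_succ]

/-- Freeing the length, the number of up-steps and the (integer) starting height of the walks
counted by `pathCount` makes the class closed under removing the first step. -/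
def IsWalk (n j : ℕ) (M : ℤ) (s : Fin (n + 1) → ℤ) : Prop :=
  (∀ t, s t = 1 ∨ s t = -1) ∧
  (univ.filter fun t => s t = 1).card = j ∧
  ∀ T : ℕ, T ≤ n →
    0 ≤ M + ∑ t ∈ univ.filter (fun t : Fin (n + 1) => (t : ℕ) < T), s t

noncomputable def walkCount (n j : ℕ) (M : ℤ) : ℕ := Nat.card {s // IsWalk n j M s}

theorem pathCount_eq_walkCount (i m : ℕ) : pathCount i m = walkCount (m + 2 * i) i m := rfl

section walkCount

variable {n j : ℕ} {M : ℤ}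

instance : Finite {s // IsWalk n j M s} := by
  refine Finite.of_injective (fun s t => s.1 t = 1) fun s s' h => Subtype.ext (funext fun t => ?_)
  have := congrFun h t
  rcases s.2.1 t with h1 | h1 <;> rcases s'.2.1 t with h2 | h2 <;> simp_all

theorem isWalk_cons_iff (hM : 0 ≤ M) (c : ℤ) (s : Fin (n + 1) → ℤ) :
    IsWalk (n + 1) j M (Fin.cons c s) ↔
      (c = 1 ∨ c = -1) ∧ (∀ t, s t = 1 ∨ s t = -1) ∧
      (if c = 1 then 1 else 0) + (univ.filter fun t => s t = 1).card = j ∧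
      ∀ T ≤ n,
        0 ≤ M + c + ∑ t ∈ univ.filter (fun t : Fin (n + 1) => (t : ℕ) < T), s t := by
  simp only [IsWalk, Fin.forall_fin_succ, Fin.cons_zero, Fin.cons_succ, Fin.card_filter_univ_succ',
    Nat.forall_le_succ_left, Fin.sum_filter_val_lt_succ_cons, add_assoc]
  simp [hM, and_assoc]

theorem isWalk_cons_one_iff (hM : 0 ≤ M) (s : Fin (n + 1) → ℤ) :
    IsWalk (n + 1) (j + 1) M (Fin.cons 1 s) ↔ IsWalk n j (M + 1) s := by
  rw [isWalk_cons_iff hM, IsWalk]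
  grind

theorem isWalk_cons_neg_one_iff (hM : 0 ≤ M) (s : Fin (n + 1) → ℤ) :
    IsWalk (n + 1) j M (Fin.cons (-1) s) ↔ IsWalk n j (M - 1) s := by
  rw [isWalk_cons_iff hM, IsWalk]
  grind

theorem walkCount_succ_succ (hM : 0 ≤ M) :
    walkCount (n + 1) (j + 1) M = walkCount n j (M + 1) + walkCount n (j + 1) (M - 1) := by
  rw [walkCount, Nat.card_subtype_eq_card_cons_add_card_cons _ (by norm_num : (1 : ℤ) ≠ -1)
    fun s hs => hs.1 0]
  simp only [isWalk_cons_one_iff hM, isWalk_cons_neg_one_iff hM, walkCount]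

theorem walkCount_of_neg (hM : M < 0) : walkCount n j M = 0 := by
  have : IsEmpty {s // IsWalk n j M s} := ⟨fun s => by
    have := s.2.2.2 0 (Nat.zero_le n)
    simp only [not_lt_zero, filter_false, sum_empty, add_zero] at this
    omega⟩
  exact Nat.card_of_isEmpty

theorem walkCount_zero (hn : n ≤ M) : walkCount n 0 M = 1 := by
  refine Nat.card_eq_one_iff_exists.2
    ⟨⟨fun _ => -1, fun _ => .inr rfl, by simp, fun T hT => ?_⟩, ?_⟩
  · simp only [sum_const, Fin.card_filter_val_lt, smul_neg, nsmul_eq_mul, mul_one]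
    have : (min (n + 1) T : ℤ) ≤ T := by exact_mod_cast min_le_right _ _
    omega
  · rintro ⟨s, hs, hup, -⟩
    ext t
    have : s t ≠ 1 := fun h => by simp_all [Finset.card_eq_zero, Finset.filter_eq_empty_iff]
    simpa [this] using hs t

end walkCount

theorem pathCount_zero_left (m : ℕ) : pathCount 0 m = 1 :=
  walkCount_zero (by simp)

theorem pathCount_succ_zero (i : ℕ) : pathCount (i + 1) 0 = pathCount i 1 := by
  rw [pathCount_eq_walkCount, show 0 + 2 * (i + 1) = 2 * i + 1 + 1 by ring, Nat.cast_zero,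
    walkCount_succ_succ le_rfl, walkCount_of_neg (M := 0 - 1) (by norm_num), pathCount_eq_walkCount,
    add_comm 1]
  simp

theorem pathCount_succ_succ (i m : ℕ) :
    pathCount (i + 1) (m + 1) = pathCount i (m + 2) + pathCount (i + 1) m := by
  simp only [pathCount_eq_walkCount]
  rw [show m + 1 + 2 * (i + 1) = m + 2 * i + 2 + 1 by ring, walkCount_succ_succ (by positivity)]
  congr 1
  · rw [show m + 2 + 2 * i = m + 2 * i + 2 by ring]; push_cast; ring_nf
  · rw [show m + 2 * (i + 1) = m + 2 * i + 2 by ring]; push_cast; ring_nf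

noncomputable def firstPassageWeight (x y : ℝ) (L m : ℕ) : ℝ :=
  ∑ i ∈ range L, (pathCount i m : ℝ) * x ^ i * y ^ (m + 1 + i)

theorem firstPassageWeight_succ_zero (x y : ℝ) (L : ℕ) :
    firstPassageWeight x y (L + 1) 0 = y + x * firstPassageWeight x y L 1 := by
  rw [firstPassageWeight, sum_range_succ', add_comm, firstPassageWeight, mul_sum]
  simp only [pathCount_succ_zero, pathCount_zero_left]
  congr 1
  · simp
  · exact sum_congr rfl fun i _ => by ring

theorem firstPassageWeight_succ_succ (x y : ℝ) (L m : ℕ) :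
    firstPassageWeight x y (L + 1) (m + 1) =
      x * firstPassageWeight x y L (m + 2) + y * firstPassageWeight x y (L + 1) m := by
  simp only [firstPassageWeight, sum_range_succ' _ L, pathCount_succ_succ, pathCount_zero_left,
    mul_add, mul_sum, Nat.cast_add, add_mul, sum_add_distrib]
  rw [add_assoc]
  congr 1
  · exact sum_congr rfl fun i _ => by ring
  · congr 1
    · exact sum_congr rfl fun i _ => by ring
    · simp; ring

theorem firstPassageWeight_add_pow_le_one {x y : ℝ} (hx : 0 ≤ x) (hy : 0 ≤ y)
    (hxy : x + y = 1) :
    ∀ L m, firstPassageWeight x y L m + x ^ (m + 2 * L) ≤ 1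
  | 0, m => by simpa [firstPassageWeight] using pow_le_one₀ hx (by linarith)
  | L + 1, 0 => by
    have := firstPassageWeight_add_pow_le_one hx hy hxy L 1
    rw [firstPassageWeight_succ_zero, show x ^ (0 + 2 * (L + 1)) = x * x ^ (1 + 2 * L) by ring]
    linarith [mul_le_mul_of_nonneg_left this hx]
  | L + 1, m + 1 => by
    have h₁ := firstPassageWeight_add_pow_le_one hx hy hxy L (m + 2)
    have h₂ := firstPassageWeight_add_pow_le_one hx hy hxy (L + 1) m
    rw [show m + 2 + 2 * L = m + 2 * (L + 1) by ring] at h₁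
    have : x ^ (m + 1 + 2 * (L + 1)) ≤ x ^ (m + 2 * (L + 1)) :=
      pow_le_pow_of_le_one hx (by linarith) (by omega)
    have hp : x * x ^ (m + 2 * (L + 1)) + y * x ^ (m + 2 * (L + 1)) = x ^ (m + 2 * (L + 1)) := by
      rw [← add_mul, hxy, one_mul]
    rw [firstPassageWeight_succ_succ]
    linarith [mul_le_mul_of_nonneg_left h₁ hx, mul_le_mul_of_nonneg_left h₂ hy]

theorem firstPassageWeight_lt_one {x y : ℝ} (hx : 0 < x) (hy : 0 ≤ y) (hxy : x + y = 1)
    (L m : ℕ) :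
    firstPassageWeight x y L m < 1 := by
  linarith [firstPassageWeight_add_pow_le_one hx.le hy hxy L m, pow_pos hx (m + 2 * L)]

/-- If `0 ≤ I < 1`, the success probability of a time-restricted double-spending attack is
strictly smaller than one, in particular even when `1/2 ≤ I < 1`. -/
theorem P_TR_lt_one (I : ℝ) (hI0 : 0 ≤ I) (hI1 : I < 1) (Z L : ℕ) :
    P_TR I Z L < 1 := by
  have hx : 0 < 1 - I := by linarith
  have hW : ∀ k ∈ range (Z + 2),
      ∑ i ∈ range L, (pathCount i (Z + 1 - k) : ℝ) * (1 - I) ^ i * I ^ (Z + 2 - k + i) =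
        firstPassageWeight (1 - I) I L (Z + 1 - k) := fun k hk =>
    sum_congr rfl fun i _ => by rw [show Z + 2 - k + i = Z + 1 - k + 1 + i by grind]
  have hgap (m : ℕ) : 0 < 1 - firstPassageWeight (1 - I) I L m :=
    sub_pos.2 (firstPassageWeight_lt_one hx hI0 (by ring) L m)
  rw [P_TR, sub_lt_self_iff]
  refine sum_pos' (fun k hk => ?_) ⟨0, by simp, ?_⟩
  · rw [hW k hk]
    exact mul_nonneg (by positivity) (hgap _).le
  · rw [hW 0 (by simp)]
    simpa using mul_pos (pow_pos hx _) (hgap _)
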